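/- arXiv:2111.07510 — 3 statements merged into one kernel-verified Lean document; each statement's English description precedes it below -/
import Mathlib

section
/- If u and v are solutions of y'' + q y = 0 with constant nonzero Wronskian w = u v' − u' v, and m = u² + v² does not vanish, then ψ'(z) = w/(u(z)² + v(z)²) satisfies Kummer's equation q − (ψ')² + (3/4)(ψ''/ψ')² − (1/2)ψ'''/ψ' = 0. -/
/-!
Write `m = u² + v²`. For `ψ' = w / m` one has `ψ''/ψ' = -m'/m` and `ψ'''/ψ' = 2(m'/m)² - m''/m`,
so the Kummer expression equals `q - w²/m² - (m'/2m)² + m''/2m`. The equations `u'' = -q u`,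
`v'' = -q v` give `m''/2m = (u'² + v'²)/m - q`, and the remainder vanishes by Lagrange's identity
`(u² + v²)(u'² + v'²) = (u v' - u' v)² + (u u' + v v')²`.
-/

open Topology

section ConstDiv

variable {m : ℝ → ℝ} {z : ℝ}

theorem deriv_deriv_const_div (w : ℝ) (hm : ContDiff ℝ 2 m) (hz : m z ≠ 0) :
    deriv (deriv fun x => w / m x) z
      = w * (2 * deriv m z ^ 2 - m z * deriv (deriv m) z) / m z ^ 3 := by
  have hm' : Differentiable ℝ m := hm.differentiable two_ne_zero
  have hderiv : deriv (fun x => w / m x) =ᶠ[𝓝 z] fun x => -w * deriv m x / m x ^ 2 := by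
    filter_upwards [hm.continuous.continuousAt.eventually_ne hz] with x hx
    exact deriv_const_div w (hm' x) hx
  have hquot : HasDerivAt (fun x => -w * deriv m x / m x ^ 2) _ z :=
    ((hm.differentiable_deriv_two z).hasDerivAt.const_mul (-w)).div
      ((hm' z).hasDerivAt.pow 2) (pow_ne_zero 2 hz)
  rw [hderiv.deriv_eq, hquot.deriv]
  field_simp
  ring

theorem kummer_const_div (q w : ℝ) (hm : ContDiff ℝ 2 m) (hz : m z ≠ 0) (hw : w ≠ 0) :
    q - (w / m z) ^ 2 + 3 / 4 * (deriv (fun x => w / m x) z / (w / m z)) ^ 2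
        - 1 / 2 * (deriv (deriv fun x => w / m x) z / (w / m z))
      = q - (w / m z) ^ 2 - (deriv m z / (2 * m z)) ^ 2 + deriv (deriv m) z / (2 * m z) := by
  rw [deriv_deriv_const_div w hm hz, deriv_const_div w (hm.differentiable two_ne_zero z) hz]
  field_simp
  ring

end ConstDiv

section SqAddSq

variable {u v : ℝ → ℝ}

theorem deriv_sq_add_sq (hu : Differentiable ℝ u) (hv : Differentiable ℝ v) :
    deriv (fun x => u x ^ 2 + v x ^ 2) = fun x => 2 * (u x * deriv u x + v x * deriv v x) := by
  ext x
  have hsum : HasDerivAt (fun x => u x ^ 2 + v x ^ 2) _ x :=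
    ((hu x).hasDerivAt.pow 2).add ((hv x).hasDerivAt.pow 2)
  rw [hsum.deriv]
  ring

theorem deriv_deriv_sq_add_sq (hu : ContDiff ℝ 2 u) (hv : ContDiff ℝ 2 v) (x : ℝ) :
    deriv (deriv fun x => u x ^ 2 + v x ^ 2) x
      = 2 * (deriv u x ^ 2 + u x * deriv (deriv u) x + deriv v x ^ 2 + v x * deriv (deriv v) x) := by
  have hu' := hu.differentiable two_ne_zero
  have hv' := hv.differentiable two_ne_zero
  have hderiv : HasDerivAt (fun x => 2 * (u x * deriv u x + v x * deriv v x)) _ x :=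
    (((hu' x).hasDerivAt.mul (hu.differentiable_deriv_two x).hasDerivAt).add
      ((hv' x).hasDerivAt.mul (hv.differentiable_deriv_two x).hasDerivAt)).const_mul 2
  rw [deriv_sq_add_sq hu' hv', hderiv.deriv]
  ring

end SqAddSq

/-- If u and v are solutions of y'' + q y = 0 with constant nonzero Wronskian w and
u² + v² > 0, then ψ' = w/(u² + v²) satisfies Kummer's equation. -/
theorem kummer_of_solutions (a b : ℝ) (q u v : ℝ → ℝ) (w : ℝ)
    (hu : ContDiff ℝ 2 u) (hv : ContDiff ℝ 2 v)
    (hum : ∀ z ∈ Set.Ioo a b, deriv (deriv u) z + q z * u z = 0)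
    (hvm : ∀ z ∈ Set.Ioo a b, deriv (deriv v) z + q z * v z = 0)
    (hw : ∀ z ∈ Set.Ioo a b, u z * deriv v z - deriv u z * v z = w)
    (hw0 : w ≠ 0)
    (hm : ∀ z ∈ Set.Ioo a b, 0 < (u z) ^ 2 + (v z) ^ 2) :
    ∀ z ∈ Set.Ioo a b,
      q z - ((fun x => w / ((u x) ^ 2 + (v x) ^ 2)) z) ^ 2
        + 3 / 4 * (deriv (fun x => w / ((u x) ^ 2 + (v x) ^ 2)) z
            / (w / ((u z) ^ 2 + (v z) ^ 2))) ^ 2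
        - 1 / 2 * (deriv (deriv (fun x => w / ((u x) ^ 2 + (v x) ^ 2))) z
            / (w / ((u z) ^ 2 + (v z) ^ 2))) = 0 := by
  intro z hz
  have hmz := (hm z hz).ne'
  have hreduce := kummer_const_div (m := fun x => u x ^ 2 + v x ^ 2) (q z) w (by fun_prop) hmz hw0
  beta_reduce at hreduce ⊢
  rw [hreduce, deriv_deriv_sq_add_sq hu hv, deriv_sq_add_sq (hu.differentiable two_ne_zero)
    (hv.differentiable two_ne_zero), eq_neg_of_add_eq_zero_left (hum z hz),
    eq_neg_of_add_eq_zero_left (hvm z hz), ← hw z hz]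
  field_simp
  ring
end

section
/- A function f : (0,∞) → ℝ is completely monotone (i.e., (−1)^j f^{(j)}(x) ≥ 0 for all j ≥ 0 and x > 0) if and only if f is the Laplace transform of a nonnegative Borel measure on [0,∞), i.e., f(x) = ∫₀^∞ e^{−xt} dμ(t) for some nonnegative Borel measure μ (Bernstein–Widder theorem). -/
open MeasureTheory

open MeasureTheory Set Filter Topology Real ENNReal NNReal Function

section CM
variable {f : ℝ → ℝ} (hf : ContDiffOn ℝ (⊤ : ℕ∞) f (Set.Ioi 0))
  (hcm : ∀ j : ℕ, ∀ x > (0 : ℝ), 0 ≤ (-1 : ℝ) ^ j * iteratedDeriv j f x)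

include hf

theorem contDiffOn_iteratedDeriv_Ioi (j : ℕ) :
    ContDiffOn ℝ (⊤ : ℕ∞) (iteratedDeriv j f) (Set.Ioi 0) := by
  induction j with
  | zero => simpa using hf
  | succ n ih =>
      rw [iteratedDeriv_succ]
      exact ih.deriv_of_isOpen isOpen_Ioi le_rfl

theorem hasDerivAt_iteratedDeriv_Ioi (j : ℕ) {x : ℝ} (hx : 0 < x) :
    HasDerivAt (iteratedDeriv j f) (iteratedDeriv (j + 1) f x) x := by
  have h := (contDiffOn_iteratedDeriv_Ioi hf j).differentiableOn (by simp)
  have := (h x hx).differentiableAt (isOpen_Ioi.mem_nhds hx)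
  rw [iteratedDeriv_succ]
  exact this.hasDerivAt

omit hf

/-- the auxiliary functions `g j = (-1)^j f^{(j)}`. -/
noncomputable def cmg (f : ℝ → ℝ) (j : ℕ) (x : ℝ) : ℝ := (-1) ^ j * iteratedDeriv j f x

theorem cmg_zero (x : ℝ) : cmg f 0 x = f x := by simp [cmg]

include hcm in
theorem cmg_nonneg (j : ℕ) {x : ℝ} (hx : 0 < x) : 0 ≤ cmg f j x := hcm j x hx

include hf

theorem hasDerivAt_cmg (j : ℕ) {x : ℝ} (hx : 0 < x) :
    HasDerivAt (cmg f j) (-(cmg f (j + 1) x)) x := by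
  have h := (hasDerivAt_iteratedDeriv_Ioi hf j hx).const_mul ((-1 : ℝ) ^ j)
  refine h.congr_deriv ?_
  simp only [cmg, pow_succ]
  ring

theorem continuousOn_cmg (j : ℕ) : ContinuousOn (cmg f j) (Set.Ioi 0) :=
  continuousOn_const.mul (contDiffOn_iteratedDeriv_Ioi hf j).continuousOn

/-- Taylor expansion with integral remainder, adapted to completely monotone setup. -/
theorem cmg_taylor (n : ℕ) {y b : ℝ} (hy : 0 < y) (hyb : y ≤ b) :
    f y = (∑ k ∈ Finset.range (n + 1), cmg f k b * (b - y) ^ k / k.factorial)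
      + ∫ t in y..b, cmg f (n + 1) t * (t - y) ^ n / n.factorial := by
  have hb : 0 < b := lt_of_lt_of_le hy hyb
  have hsub : Set.uIcc y b ⊆ Set.Ioi 0 := by
    rw [Set.uIcc_of_le hyb]
    exact fun t ht => lt_of_lt_of_le hy ht.1
  induction n with
  | zero =>
      have hder : ∀ t ∈ Set.uIcc y b, HasDerivAt f (-(cmg f 1 t)) t := by
        intro t ht
        have := hasDerivAt_cmg hf 0 (hsub ht)
        have h0 : cmg f 0 = f := funext (cmg_zero)
        rwa [h0] at this
      have hint : IntervalIntegrable (fun t => -(cmg f 1 t)) volume y b :=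
        (((continuousOn_cmg hf 1).mono hsub).neg).intervalIntegrable
      have key := intervalIntegral.integral_eq_sub_of_hasDerivAt hder hint
      rw [intervalIntegral.integral_neg] at key
      have hsum : (∑ k ∈ Finset.range 1, cmg f k b * (b - y) ^ k / k.factorial) = f b := by
        simp [cmg_zero]
      have hintg : (∫ t in y..b, cmg f 1 t * (t - y) ^ 0 / (Nat.factorial 0 : ℝ))
          = ∫ t in y..b, cmg f 1 t := by
        simp
      rw [hsum, hintg]
      linarith
  | succ n ih =>
      have hu : ∀ t ∈ Set.uIcc y b, HasDerivAt (cmg f (n + 1)) (-(cmg f (n + 2) t)) t :=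
        fun t ht => hasDerivAt_cmg hf (n + 1) (hsub ht)
      have hv : ∀ t ∈ Set.uIcc y b,
          HasDerivAt (fun t => (t - y) ^ (n + 1) / (n + 1).factorial)
            ((t - y) ^ n / n.factorial) t := by
        intro t _
        have h1 : HasDerivAt (fun t : ℝ => (t - y) ^ (n + 1))
            (((n + 1 : ℕ) : ℝ) * (t - y) ^ n) t := by
          have := ((hasDerivAt_id t).sub_const y).pow (n + 1)
          exact this.congr_deriv (by simp)
        have h2 := h1.div_const ((n + 1).factorial : ℝ)
        refine h2.congr_deriv ?_
        rw [Nat.factorial_succ]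
        have hn : (n.factorial : ℝ) ≠ 0 := Nat.cast_ne_zero.mpr n.factorial_ne_zero
        push_cast
        field_simp
      have hu' : IntervalIntegrable (fun t => -(cmg f (n + 2) t)) volume y b :=
        (((continuousOn_cmg hf (n + 2)).mono hsub).neg).intervalIntegrable
      have hv' : IntervalIntegrable (fun t => (t - y) ^ n / (n.factorial : ℝ)) volume y b :=
        (Continuous.intervalIntegrable (by continuity) y b)
      have hparts := intervalIntegral.integral_mul_deriv_eq_deriv_mul hu hv hu' hv'
      have hrem : (∫ t in y..b, cmg f (n + 1) t * ((t - y) ^ n / n.factorial))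
          = cmg f (n + 1) b * ((b - y) ^ (n + 1) / (n + 1).factorial)
            + ∫ t in y..b, cmg f (n + 2) t * (t - y) ^ (n + 1) / (n + 1).factorial := by
        rw [hparts]
        have hyy : ((y - y : ℝ)) ^ (n + 1) = 0 := by simp
        rw [hyy]
        have : (∫ t in y..b, -cmg f (n + 2) t * ((t - y) ^ (n + 1) / (n + 1).factorial))
            = -∫ t in y..b, cmg f (n + 2) t * (t - y) ^ (n + 1) / (n + 1).factorial := by
          rw [← intervalIntegral.integral_neg]
          congr 1; ext t; ring
        rw [this]
        ring
      rw [ih]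
      rw [Finset.sum_range_succ (fun k => cmg f k b * (b - y) ^ k / k.factorial) (n + 1)]
      have hswap : (∫ t in y..b, cmg f (n + 1) t * (t - y) ^ n / n.factorial)
          = ∫ t in y..b, cmg f (n + 1) t * ((t - y) ^ n / n.factorial) := by
        congr 1; ext t; ring
      rw [hswap, hrem]
      ring

end CM

section CM2
variable {f : ℝ → ℝ} (hf : ContDiffOn ℝ (⊤ : ℕ∞) f (Set.Ioi 0))
  (hcm : ∀ j : ℕ, ∀ x > (0 : ℝ), 0 ≤ (-1 : ℝ) ^ j * iteratedDeriv j f x)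

include hcm in
theorem cmg_term_nonneg (k : ℕ) {y b : ℝ} (hb : 0 < b) (hyb : y ≤ b) :
    0 ≤ cmg f k b * (b - y) ^ k / k.factorial := by
  apply div_nonneg (mul_nonneg (cmg_nonneg hcm k hb) (pow_nonneg (by linarith) k))
  positivity

include hf hcm

theorem cmg_remainder_nonneg (n : ℕ) {y b : ℝ} (hy : 0 < y) (hyb : y ≤ b) :
    0 ≤ ∫ t in y..b, cmg f (n + 1) t * (t - y) ^ n / n.factorial := by
  apply intervalIntegral.integral_nonneg hyb
  intro t ht
  apply div_nonneg (mul_nonneg (cmg_nonneg hcm (n + 1) (lt_of_lt_of_le hy ht.1))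
    (pow_nonneg (by linarith [ht.1]) n))
  positivity

theorem cmg_partial_le (n : ℕ) {y b : ℝ} (hy : 0 < y) (hyb : y ≤ b) :
    (∑ k ∈ Finset.range (n + 1), cmg f k b * (b - y) ^ k / k.factorial) ≤ f y := by
  have := cmg_taylor hf n hy hyb
  have h2 := cmg_remainder_nonneg hf hcm n hy hyb
  linarith

theorem cmg_hasSum {y b : ℝ} (hy : 0 < y) (hyb : y < b) :
    HasSum (fun k => cmg f k b * (b - y) ^ k / k.factorial) (f y) := by
  have hy2 : (0 : ℝ) < y / 2 := by linarith
  have hy2y : y / 2 < y := by linarith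
  have hy2b : y / 2 ≤ b := by linarith
  set q : ℝ := (b - y) / (b - y / 2) with hq
  have hby2 : (0 : ℝ) < b - y / 2 := by linarith
  have hq0 : 0 ≤ q := div_nonneg (by linarith) hby2.le
  have hq1 : q < 1 := by
    rw [div_lt_one hby2]; linarith
  -- remainder bound
  have key : ∀ n : ℕ,
      (∫ t in y..b, cmg f (n + 1) t * (t - y) ^ n / n.factorial) ≤ q ^ n * f (y / 2) := by
    intro n
    have cont1 : ContinuousOn (fun t => cmg f (n + 1) t * (t - y) ^ n / n.factorial)
        (Set.uIcc y b) := by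
      apply ContinuousOn.div_const
      apply ContinuousOn.mul
      · apply (continuousOn_cmg hf (n + 1)).mono
        rw [Set.uIcc_of_le hyb.le]
        exact fun t ht => lt_of_lt_of_le hy ht.1
      · exact (continuous_pow n).comp_continuousOn (by fun_prop)
    have cont2 : ContinuousOn (fun t => q ^ n * (cmg f (n + 1) t * (t - y / 2) ^ n / n.factorial))
        (Set.uIcc y b) := by
      apply ContinuousOn.const_smul (?_) (q ^ n)
      apply ContinuousOn.div_const
      apply ContinuousOn.mul
      · apply (continuousOn_cmg hf (n + 1)).mono
        rw [Set.uIcc_of_le hyb.le]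
        exact fun t ht => lt_of_lt_of_le hy ht.1
      · exact (continuous_pow n).comp_continuousOn (by fun_prop)
    have step1 : (∫ t in y..b, cmg f (n + 1) t * (t - y) ^ n / n.factorial)
        ≤ ∫ t in y..b, q ^ n * (cmg f (n + 1) t * (t - y / 2) ^ n / n.factorial) := by
      apply intervalIntegral.integral_mono_on hyb.le
        (cont1.intervalIntegrable) (cont2.intervalIntegrable)
      intro t ht
      have ht1 : y ≤ t := ht.1
      have ht2 : t ≤ b := ht.2
      have htpos : 0 < t := lt_of_lt_of_le hy ht1
      have hfac : (0:ℝ) < (n.factorial : ℝ) := by positivity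
      have hmain : cmg f (n + 1) t * (t - y) ^ n ≤ q ^ n * (cmg f (n + 1) t * (t - y / 2) ^ n) := by
        rw [show q ^ n * (cmg f (n+1) t * (t - y/2) ^ n)
            = cmg f (n+1) t * (q * (t - y/2)) ^ n by rw [mul_pow]; ring]
        apply mul_le_mul_of_nonneg_left _ (cmg_nonneg hcm (n + 1) htpos)
        apply pow_le_pow_left₀ (by linarith)
        rw [hq, div_mul_eq_mul_div, le_div_iff₀ hby2]
        nlinarith
      calc cmg f (n + 1) t * (t - y) ^ n / n.factorial
          ≤ q ^ n * (cmg f (n + 1) t * (t - y / 2) ^ n) / n.factorial := by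
            exact div_le_div_of_nonneg_right hmain hfac.le |>.trans_eq rfl
        _ = q ^ n * (cmg f (n + 1) t * (t - y / 2) ^ n / n.factorial) := by ring
    have step2 : (∫ t in y..b, q ^ n * (cmg f (n + 1) t * (t - y / 2) ^ n / n.factorial))
        = q ^ n * ∫ t in y..b, cmg f (n + 1) t * (t - y / 2) ^ n / n.factorial := by
      exact intervalIntegral.integral_const_mul _ _
    have cont3 : ContinuousOn (fun t => cmg f (n + 1) t * (t - y / 2) ^ n / n.factorial)
        (Set.uIcc (y/2) b) := by
      apply ContinuousOn.div_const
      apply ContinuousOn.mul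
      · apply (continuousOn_cmg hf (n + 1)).mono
        rw [Set.uIcc_of_le hy2b]
        exact fun t ht => lt_of_lt_of_le hy2 ht.1
      · exact (continuous_pow n).comp_continuousOn (by fun_prop)
    have step3 : (∫ t in y..b, cmg f (n + 1) t * (t - y / 2) ^ n / n.factorial)
        ≤ ∫ t in (y/2)..b, cmg f (n + 1) t * (t - y / 2) ^ n / n.factorial := by
      have hsplit := intervalIntegral.integral_add_adjacent_intervals
        (a := y / 2) (b := y) (c := b) (μ := volume)
        (cont3.mono (by rw [Set.uIcc_of_le hy2b, Set.uIcc_of_le hy2y.le]; exact Set.Icc_subset_Icc le_rfl hyb.le)).intervalIntegrable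
        (cont3.mono (by rw [Set.uIcc_of_le hy2b, Set.uIcc_of_le hyb.le]; exact Set.Icc_subset_Icc hy2y.le le_rfl)).intervalIntegrable
      have hpos : 0 ≤ ∫ t in (y/2)..y, cmg f (n + 1) t * (t - y / 2) ^ n / n.factorial := by
        apply intervalIntegral.integral_nonneg hy2y.le
        intro t ht
        apply div_nonneg (mul_nonneg (cmg_nonneg hcm (n + 1) (lt_of_lt_of_le hy2 ht.1))
          (pow_nonneg (by linarith [ht.1]) n))
        positivity
      linarith [hsplit]
    have step4 : (∫ t in (y/2)..b, cmg f (n + 1) t * (t - y / 2) ^ n / n.factorial) ≤ f (y/2) := by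
      have := cmg_taylor hf n hy2 hy2b
      have h2 : 0 ≤ ∑ k ∈ Finset.range (n + 1), cmg f k b * (b - y/2) ^ k / k.factorial :=
        Finset.sum_nonneg fun k _ => cmg_term_nonneg hcm k (by linarith) hy2b
      linarith
    calc (∫ t in y..b, cmg f (n + 1) t * (t - y) ^ n / n.factorial)
        ≤ q ^ n * ∫ t in y..b, cmg f (n + 1) t * (t - y / 2) ^ n / n.factorial := by
          rw [← step2]; exact step1
      _ ≤ q ^ n * f (y / 2) := by
          apply mul_le_mul_of_nonneg_left _ (pow_nonneg hq0 n)
          linarith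
  -- now conclude
  have htend : Tendsto (fun n => ∑ k ∈ Finset.range (n + 1),
      cmg f k b * (b - y) ^ k / k.factorial) atTop (𝓝 (f y)) := by
    have hR : Tendsto (fun n : ℕ => q ^ n * f (y / 2)) atTop (𝓝 0) := by
      simpa using (tendsto_pow_atTop_nhds_zero_of_lt_one hq0 hq1).mul_const (f (y/2))
    have hsq : Tendsto (fun n => f y - ∑ k ∈ Finset.range (n + 1),
        cmg f k b * (b - y) ^ k / k.factorial) atTop (𝓝 0) := by
      apply squeeze_zero (g := fun n => q ^ n * f (y / 2))
      · intro n
        have := cmg_taylor hf n hy hyb.le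
        have h2 := cmg_remainder_nonneg hf hcm n hy hyb.le
        linarith
      · intro n
        have := cmg_taylor hf n hy hyb.le
        have := key n
        linarith
      · exact hR
    have := (tendsto_const_nhds (x := f y) (f := atTop (α := ℕ))).sub hsq
    simpa using this
  rw [hasSum_iff_tendsto_nat_of_nonneg (fun k => cmg_term_nonneg hcm k (by linarith) hyb.le)]
  rw [← tendsto_add_atTop_iff_nat 1]
  exact htend

end CM2

noncomputable def lapT (ν : Measure ℝ) (x : ℝ) : ℝ≥0∞ :=
  ∫⁻ t, ENNReal.ofReal (Real.exp (-x * t)) ∂ν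

noncomputable def bwMeas (f : ℝ → ℝ) (n : ℕ) : Measure ℝ :=
  Measure.sum (fun k : ℕ => ENNReal.ofReal (cmg f k n * (n : ℝ) ^ k / k.factorial)
    • Measure.dirac ((k : ℝ) / n))

example (f : ℝ → ℝ) (n : ℕ) : SFinite (bwMeas f n) := by unfold bwMeas; infer_instance

theorem bwMeas_Iio (f : ℝ → ℝ) (n : ℕ) : bwMeas f n (Set.Iio 0) = 0 := by
  rw [bwMeas, Measure.sum_apply _ measurableSet_Iio]
  apply ENNReal.tsum_eq_zero.mpr
  intro k
  rw [Measure.smul_apply, Measure.dirac_apply' _ measurableSet_Iio]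
  have : ((k : ℝ) / n) ∉ Set.Iio (0:ℝ) := by
    simp only [Set.mem_Iio, not_lt]
    positivity
  simp [Set.indicator_of_notMem this]

theorem bwMeas_lintegral (f : ℝ → ℝ) (n : ℕ) (g : ℝ → ℝ≥0∞) (hg : Measurable g) :
    ∫⁻ t, g t ∂(bwMeas f n)
      = ∑' k : ℕ, ENNReal.ofReal (cmg f k n * (n : ℝ) ^ k / k.factorial) * g ((k : ℝ) / n) := by
  rw [bwMeas, lintegral_sum_measure]
  congr 1
  ext k
  rw [lintegral_smul_measure, lintegral_dirac' _ hg, smul_eq_mul]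

noncomputable def yseq (x : ℝ) (n : ℕ) : ℝ := n * (1 - Real.exp (-x / n))

theorem yseq_pos {x : ℝ} (hx : 0 < x) {n : ℕ} (hn : 1 ≤ n) : 0 < yseq x n := by
  have hn' : (0:ℝ) < n := by exact_mod_cast hn
  apply mul_pos hn'
  have : Real.exp (-x / n) < 1 := by
    rw [Real.exp_lt_one_iff, neg_div]
    have : 0 < x / n := div_pos hx hn'
    linarith
  linarith

theorem yseq_lt {x : ℝ} (hx : 0 < x) {n : ℕ} (hn : 1 ≤ n) : yseq x n < n := by
  have hn' : (0:ℝ) < n := by exact_mod_cast hn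
  have h1 : 0 < Real.exp (-x / n) := Real.exp_pos _
  calc yseq x n = n * (1 - Real.exp (-x / n)) := rfl
    _ < n * 1 := by apply mul_lt_mul_of_pos_left _ hn'; linarith
    _ = n := mul_one _

theorem yseq_tendsto {x : ℝ} (hx : 0 < x) : Tendsto (yseq x) atTop (𝓝 x) := by
  -- yseq x n = x * ((1 - exp (-u))/u) with u = x / n
  have hslope : Tendsto (fun u : ℝ => (1 - Real.exp (-u)) / u) (𝓝[≠] 0) (𝓝 1) := by
    have hd : HasDerivAt (fun u : ℝ => 1 - Real.exp (-u)) 1 0 := by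
      have h1 : HasDerivAt (fun u : ℝ => Real.exp (-u)) (-1) 0 := by
        have := ((hasDerivAt_id (0:ℝ)).neg).exp
        simpa using this
      exact ((hasDerivAt_const 0 (1:ℝ)).sub h1).congr_deriv (by simp)
    have := hasDerivAt_iff_tendsto_slope.mp hd
    apply this.congr'
    filter_upwards [self_mem_nhdsWithin] with u hu
    rw [slope_def_field]
    simp [Real.exp_zero]
  have hu : Tendsto (fun n : ℕ => x / n) atTop (𝓝[≠] 0) := by
    apply tendsto_nhdsWithin_of_tendsto_nhds_of_eventually_within
    · exact tendsto_const_nhds.div_atTop tendsto_natCast_atTop_atTop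
    · filter_upwards [eventually_ge_atTop 1] with n hn
      have hn' : (0:ℝ) < n := by exact_mod_cast hn
      exact (div_pos hx hn').ne'
  have hcomp : Tendsto (fun n : ℕ => x * ((1 - Real.exp (-(x / n))) / (x / n))) atTop (𝓝 x) := by
    have := (hslope.comp hu).const_mul x
    simpa using this
  apply hcomp.congr'
  filter_upwards [eventually_ge_atTop 1] with n hn
  have hn' : (0:ℝ) < n := by exact_mod_cast hn
  have hxn : x / n ≠ 0 := (div_pos hx hn').ne'
  unfold yseq
  field_simp

section CM3
variable {f : ℝ → ℝ} (hf : ContDiffOn ℝ (⊤ : ℕ∞) f (Set.Ioi 0))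
  (hcm : ∀ j : ℕ, ∀ x > (0 : ℝ), 0 ≤ (-1 : ℝ) ^ j * iteratedDeriv j f x)

include hf hcm in
theorem lapT_bwMeas {x : ℝ} (hx : 0 < x) {n : ℕ} (hn : 1 ≤ n) :
    lapT (bwMeas f n) x = ENNReal.ofReal (f (yseq x n)) := by
  have hn' : (0:ℝ) < n := by exact_mod_cast hn
  have hg : Measurable (fun t : ℝ => ENNReal.ofReal (Real.exp (-x * t))) := by
    apply ENNReal.measurable_ofReal.comp
    exact (Real.continuous_exp.comp (continuous_const.mul continuous_id)).measurable
  rw [lapT, bwMeas_lintegral f n _ hg]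
  have hsum := cmg_hasSum hf hcm (yseq_pos hx hn) (yseq_lt hx hn)
  have hterm : ∀ k : ℕ, cmg f k n * ((n:ℝ) - yseq x n) ^ k / k.factorial
      = cmg f k n * (n:ℝ) ^ k / k.factorial * Real.exp (-x * ((k:ℝ) / n)) := by
    intro k
    have h1 : (n:ℝ) - yseq x n = n * Real.exp (-x / n) := by unfold yseq; ring
    rw [h1, mul_pow, ← Real.exp_nat_mul]
    rw [show (k : ℝ) * (-x / n) = -x * ((k:ℝ)/n) by ring]
    ring
  have hsum' : HasSum (fun k : ℕ => cmg f k n * (n:ℝ) ^ k / k.factorial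
      * Real.exp (-x * ((k:ℝ) / n))) (f (yseq x n)) := by
    simpa only [hterm] using hsum
  have hnn : ∀ k : ℕ, 0 ≤ cmg f k n * (n:ℝ) ^ k / k.factorial := fun k => by
    apply div_nonneg (mul_nonneg (hcm k (n:ℝ) hn') (pow_nonneg hn'.le k))
    positivity
  calc (∑' k : ℕ, ENNReal.ofReal (cmg f k n * (n : ℝ) ^ k / k.factorial)
        * ENNReal.ofReal (Real.exp (-x * ((k : ℝ) / n))))
      = ∑' k : ℕ, ENNReal.ofReal (cmg f k n * (n : ℝ) ^ k / k.factorial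
          * Real.exp (-x * ((k : ℝ) / n))) := by
        congr 1; ext k; rw [ENNReal.ofReal_mul (hnn k)]
    _ = ENNReal.ofReal (f (yseq x n)) := by
        rw [← ENNReal.ofReal_tsum_of_nonneg
          (fun k => mul_nonneg (hnn k) (Real.exp_nonneg _)) hsum'.summable]
        rw [hsum'.tsum_eq]
end CM3

theorem meas_Iic_le_lapT (ν : Measure ℝ) (h0 : ν (Set.Iio 0) = 0) {x' : ℝ} (hx' : 0 ≤ x')
    (s : ℝ) : ν (Set.Iic s) ≤ ENNReal.ofReal (Real.exp (x' * s)) * lapT ν x' := by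
  have hae : ∀ᵐ t ∂ν, 0 ≤ t := by
    rw [ae_iff]
    have : {t : ℝ | ¬ 0 ≤ t} = Set.Iio 0 := by ext t; simp
    rw [this]; exact h0
  have h1 : ν (Set.Iic s) = ∫⁻ t, (Set.Iic s).indicator 1 t ∂ν :=
    (lintegral_indicator_one measurableSet_Iic).symm
  rw [h1]
  have h2 : (∫⁻ t, ENNReal.ofReal (Real.exp (x' * s)) * ENNReal.ofReal (Real.exp (-x' * t)) ∂ν)
      = ENNReal.ofReal (Real.exp (x' * s)) * lapT ν x' := by
    rw [lapT, lintegral_const_mul]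
    apply ENNReal.measurable_ofReal.comp
    exact (Real.continuous_exp.comp (continuous_const.mul continuous_id)).measurable
  rw [← h2]
  apply lintegral_mono_ae
  filter_upwards [hae] with t ht
  by_cases hts : t ∈ Set.Iic s
  · rw [Set.indicator_of_mem hts]
    simp only [Pi.one_apply]
    rw [← ENNReal.ofReal_mul (Real.exp_nonneg _), ← Real.exp_add]
    rw [show (1 : ℝ≥0∞) = ENNReal.ofReal 1 by simp]
    apply ENNReal.ofReal_le_ofReal
    rw [Real.one_le_exp_iff]
    have : t ≤ s := hts
    nlinarith
  · rw [Set.indicator_of_notMem hts]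
    exact zero_le

theorem lintegral_exp_tail {x : ℝ} (hx : 0 < x) (t : ℝ) :
    ∫⁻ s in Set.Ioi t, ENNReal.ofReal (x * Real.exp (-x * s))
      = ENNReal.ofReal (Real.exp (-x * t)) := by
  have hint : IntegrableOn (fun s : ℝ => x * Real.exp (-x * s)) (Set.Ioi t) := by
    apply Integrable.const_mul
    exact exp_neg_integrableOn_Ioi t hx
  have hF : ∀ s ∈ Set.Ici t, HasDerivAt (fun s : ℝ => -Real.exp (-x * s))
      (x * Real.exp (-x * s)) s := by
    intro s _
    have h1 : HasDerivAt (fun s : ℝ => -x * s) (-x) s := by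
      simpa using (hasDerivAt_id s).const_mul (-x)
    have h3 := h1.exp.neg
    refine h3.congr_deriv ?_
    ring
  have htend : Tendsto (fun s : ℝ => -Real.exp (-x * s)) atTop (𝓝 0) := by
    rw [show (0:ℝ) = -0 by simp]
    apply Filter.Tendsto.neg
    have h4 : Tendsto (fun s : ℝ => x * s) atTop atTop :=
      Tendsto.const_mul_atTop hx tendsto_id
    exact Real.tendsto_exp_atBot.comp
      (Tendsto.congr (fun s => (neg_mul x s).symm) (tendsto_neg_atTop_atBot.comp h4))
  have hval := integral_Ioi_of_hasDerivAt_of_tendsto'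
    (f := fun s : ℝ => -Real.exp (-x * s)) (f' := fun s => x * Real.exp (-x * s))
    hF hint htend
  have : (∫ s in Set.Ioi t, x * Real.exp (-x * s)) = Real.exp (-x * t) := by
    rw [hval]
    ring
  rw [← MeasureTheory.ofReal_integral_eq_lintegral_ofReal hint
    (Filter.Eventually.of_forall fun s => by positivity), this]

theorem lapT_eq_lintegral_Iio (ν : Measure ℝ) [SFinite ν] {x : ℝ} (hx : 0 < x) :
    lapT ν x = ∫⁻ s, ENNReal.ofReal (x * Real.exp (-x * s)) * ν (Set.Iio s) := by
  have hmeas : Measurable (Function.uncurry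
      (fun t s : ℝ => if t < s then ENNReal.ofReal (x * Real.exp (-x * s)) else 0)) := by
    apply Measurable.ite
    · exact measurableSet_lt measurable_fst measurable_snd
    · measurability
    · exact measurable_const
  have swap := lintegral_lintegral_swap (μ := ν) (ν := volume) hmeas.aemeasurable
  have lhs_eq : (∫⁻ t, ∫⁻ s, (if t < s then ENNReal.ofReal (x * Real.exp (-x * s)) else 0) ∂volume ∂ν)
      = lapT ν x := by
    rw [lapT]
    congr 1
    ext t
    have : (fun s => if t < s then ENNReal.ofReal (x * Real.exp (-x * s)) else 0)
        = (Set.Ioi t).indicator (fun s => ENNReal.ofReal (x * Real.exp (-x * s))) := by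
      ext s
      by_cases h : t < s
      · rw [if_pos h, Set.indicator_of_mem (Set.mem_Ioi.mpr h)]
      · rw [if_neg h, Set.indicator_of_notMem (by simpa using h)]
    rw [this, lintegral_indicator measurableSet_Ioi, lintegral_exp_tail hx t]
  have rhs_eq : (∫⁻ s, ∫⁻ t, (if t < s then ENNReal.ofReal (x * Real.exp (-x * s)) else 0) ∂ν ∂volume)
      = ∫⁻ s, ENNReal.ofReal (x * Real.exp (-x * s)) * ν (Set.Iio s) := by
    congr 1
    ext s
    have : (fun t => if t < s then ENNReal.ofReal (x * Real.exp (-x * s)) else 0)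
        = (Set.Iio s).indicator (fun _ => ENNReal.ofReal (x * Real.exp (-x * s))) := by
      ext t
      by_cases h : t < s
      · rw [if_pos h, Set.indicator_of_mem (Set.mem_Iio.mpr h)]
      · rw [if_neg h, Set.indicator_of_notMem (by simpa using h)]
    rw [this, lintegral_indicator measurableSet_Iio, lintegral_const]
    rw [Measure.restrict_apply_univ]
  rw [← lhs_eq, swap, rhs_eq]

theorem helly_subseq (ν : ℕ → Measure ℝ) :
    ∃ (φ : ℕ → ℕ) (G : ℚ → ℝ≥0∞), StrictMono φ ∧
      ∀ q : ℚ, Tendsto (fun j => ν (φ j) (Set.Iic (q:ℝ))) atTop (𝓝 (G q)) := by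
  obtain ⟨a, φ, hφ, ha⟩ := CompactSpace.tendsto_subseq
    (x := fun n => (fun q : ℚ => ν n (Set.Iic (q:ℝ))))
  exact ⟨φ, a, hφ, fun q => tendsto_pi_nhds.mp ha q⟩

section Limit
variable {G : ℚ → ℝ≥0∞} (hfin : ∀ q, G q ≠ ∞)

/-- the candidate limit CDF -/
noncomputable def hellyF (G : ℚ → ℝ≥0∞) (t : ℝ) : ℝ :=
  sInf ((fun q : ℚ => (G q).toReal) '' {q : ℚ | t < (q:ℝ)})

theorem hellyF_nonempty (t : ℝ) :
    ((fun q : ℚ => (G q).toReal) '' {q : ℚ | t < (q:ℝ)}).Nonempty := by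
  obtain ⟨q, hq⟩ := exists_rat_gt t
  exact ⟨(G q).toReal, ⟨q, hq, rfl⟩⟩

theorem hellyF_bddBelow (t : ℝ) :
    BddBelow ((fun q : ℚ => (G q).toReal) '' {q : ℚ | t < (q:ℝ)}) :=
  ⟨0, fun y ⟨q, _, hq⟩ => hq ▸ ENNReal.toReal_nonneg⟩

theorem hellyF_nonneg (t : ℝ) : 0 ≤ hellyF G t :=
  le_csInf (hellyF_nonempty t) (fun y ⟨q, _, hq⟩ => hq ▸ ENNReal.toReal_nonneg)

theorem hellyF_le {t : ℝ} {q : ℚ} (h : t < (q:ℝ)) : hellyF G t ≤ (G q).toReal :=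
  csInf_le (hellyF_bddBelow t) ⟨q, h, rfl⟩

theorem hellyF_mono : Monotone (hellyF G) := by
  intro s t hst
  apply csInf_le_csInf (hellyF_bddBelow s) (hellyF_nonempty t)
  exact Set.image_mono (fun q hq => lt_of_le_of_lt hst hq)

theorem hellyF_right_continuous (t : ℝ) :
    ContinuousWithinAt (hellyF G) (Set.Ici t) t := by
  rw [ContinuousWithinAt]
  rw [tendsto_order]
  constructor
  · intro l hl
    filter_upwards [self_mem_nhdsWithin] with u hu
    exact lt_of_lt_of_le hl (hellyF_mono hu)
  · intro u hu
    obtain ⟨y, ⟨q, hq, rfl⟩, hy⟩ := exists_lt_of_csInf_lt (hellyF_nonempty t) hu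
    have : Set.Ico t (q:ℝ) ∈ 𝓝[Set.Ici t] t := by
      apply mem_nhdsWithin.mpr
      exact ⟨Set.Iio (q:ℝ), isOpen_Iio, hq, fun z hz => ⟨hz.2, hz.1⟩⟩
    filter_upwards [this] with z hz
    exact lt_of_le_of_lt (hellyF_le hz.2) hy

/-- the limit Stieltjes function -/
noncomputable def hellySt (G : ℚ → ℝ≥0∞) : StieltjesFunction ℝ where
  toFun := hellyF G
  mono' := hellyF_mono
  right_continuous' := hellyF_right_continuous

theorem hellyF_eq_zero (hG0 : ∀ q : ℚ, q < 0 → G q = 0) {t : ℝ} (ht : t < 0) :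
    hellyF G t = 0 := by
  apply le_antisymm _ (hellyF_nonneg t)
  obtain ⟨q, hq1, hq2⟩ := exists_rat_btwn ht
  have : (G q).toReal = 0 := by rw [hG0 q (by exact_mod_cast hq2)]; simp
  calc hellyF G t ≤ (G q).toReal := hellyF_le hq1
    _ = 0 := this

theorem hellySt_tendsto_atBot (hG0 : ∀ q : ℚ, q < 0 → G q = 0) :
    Tendsto (hellyF G) atBot (𝓝 0) := by
  apply Tendsto.congr' _ tendsto_const_nhds
  filter_upwards [eventually_lt_atBot (0:ℝ)] with t ht
  exact (hellyF_eq_zero hG0 ht).symm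

end Limit

section Limit2
variable {G : ℚ → ℝ≥0∞}

theorem helly_tendsto (ν : ℕ → Measure ℝ) (φ : ℕ → ℕ)
    (hconv : ∀ q : ℚ, Tendsto (fun j => ν (φ j) (Set.Iic (q:ℝ))) atTop (𝓝 (G q)))
    (hfin : ∀ q, G q ≠ ∞) {t : ℝ} (hcont : ContinuousAt (hellyF G) t) :
    Tendsto (fun j => ν (φ j) (Set.Iic t)) atTop (𝓝 (ENNReal.ofReal (hellyF G t))) := by
  refine tendsto_of_le_liminf_of_limsup_le ?_ ?_
  · -- ofReal (F t) ≤ liminf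
    have hmem : ∀ s : ℝ, s < t →
        ENNReal.ofReal (hellyF G s) ≤ liminf (fun j => ν (φ j) (Set.Iic t)) atTop := by
      intro s hst
      obtain ⟨q, hq1, hq2⟩ := exists_rat_btwn hst
      have h1 : ENNReal.ofReal (hellyF G s) ≤ G q := by
        rw [← ENNReal.ofReal_toReal (hfin q)]
        exact ENNReal.ofReal_le_ofReal (hellyF_le hq1)
      have h2 : G q ≤ liminf (fun j => ν (φ j) (Set.Iic t)) atTop := by
        rw [← (hconv q).liminf_eq]
        refine liminf_le_liminf ?_
        filter_upwards with j
        exact measure_mono (Set.Iic_subset_Iic.mpr hq2.le)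
      exact h1.trans h2
    have htd : Tendsto (fun s => ENNReal.ofReal (hellyF G s)) (𝓝[<] t)
        (𝓝 (ENNReal.ofReal (hellyF G t))) := by
      apply (ENNReal.continuous_ofReal.continuousAt.tendsto).comp
      exact (hcont.continuousWithinAt).tendsto
    apply le_of_tendsto htd
    filter_upwards [self_mem_nhdsWithin] with s hs
    exact hmem s hs
  · -- limsup ≤ ofReal (F t)
    apply ENNReal.le_of_forall_pos_le_add
    intro ε hε _
    have hlt : hellyF G t < hellyF G t + (ε : ℝ) := by
      have : (0:ℝ) < ε := hε
      linarith
    obtain ⟨y, ⟨q, hq, rfl⟩, hy⟩ := exists_lt_of_csInf_lt (hellyF_nonempty t) hlt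
    have h1 : limsup (fun j => ν (φ j) (Set.Iic t)) atTop ≤ G q := by
      rw [← (hconv q).limsup_eq]
      refine limsup_le_limsup ?_
      filter_upwards with j
      exact measure_mono (Set.Iic_subset_Iic.mpr hq.le)
    have h2 : G q ≤ ENNReal.ofReal (hellyF G t) + ε := by
      rw [← ENNReal.ofReal_toReal (hfin q)]
      calc ENNReal.ofReal (G q).toReal ≤ ENNReal.ofReal (hellyF G t + (ε:ℝ)) :=
            ENNReal.ofReal_le_ofReal hy.le
        _ ≤ ENNReal.ofReal (hellyF G t) + ENNReal.ofReal (ε:ℝ) := ENNReal.ofReal_add_le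
        _ = ENNReal.ofReal (hellyF G t) + ε := by
            rw [ENNReal.ofReal_coe_nnreal]
    exact h1.trans h2

theorem hellySt_measure_Iic (hG0 : ∀ q : ℚ, q < 0 → G q = 0) (t : ℝ) :
    (hellySt G).measure (Set.Iic t) = ENNReal.ofReal (hellyF G t) := by
  rw [StieltjesFunction.measure_Iic (hellySt G) (l := 0) (hellySt_tendsto_atBot hG0) t, sub_zero]
  rfl

theorem hellySt_singleton {t : ℝ} (hcont : ContinuousAt (hellyF G) t) :
    (hellySt G).measure {t} = 0 := by
  rw [StieltjesFunction.measure_singleton]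
  have : leftLim (hellyF G) t = hellyF G t := by
    have h := (hellyF_mono (G := G)).continuousAt_iff_leftLim_eq_rightLim.mp hcont
    have h2 := (hellyF_mono (G := G)).leftLim_le (le_refl t)
    have h3 := (hellyF_mono (G := G)).le_rightLim (le_refl t)
    rw [h]
    linarith [h2, h3]
  rw [show (hellySt G : ℝ → ℝ) = hellyF G from rfl, this]
  simp

theorem hellySt_measure_Iio {t : ℝ} (hG0 : ∀ q : ℚ, q < 0 → G q = 0)
    (hcont : ContinuousAt (hellyF G) t) :
    (hellySt G).measure (Set.Iio t) = ENNReal.ofReal (hellyF G t) := by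
  have h1 : (hellySt G).measure (Set.Iic t) = (hellySt G).measure (Set.Iio t)
      + (hellySt G).measure {t} := by
    rw [← measure_union (by simp) (measurableSet_singleton t)]
    congr 1
    ext u; simp [le_iff_lt_or_eq]
  rw [hellySt_singleton hcont, add_zero] at h1
  rw [← h1, hellySt_measure_Iic hG0]

theorem hellySt_Iio_zero (hG0 : ∀ q : ℚ, q < 0 → G q = 0) :
    (hellySt G).measure (Set.Iio 0) = 0 := by
  have : ∀ t : ℝ, t < 0 → (hellySt G).measure (Set.Iic t) = 0 := by
    intro t ht
    rw [hellySt_measure_Iic hG0, hellyF_eq_zero hG0 ht]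
    simp
  have hunion : Set.Iio (0:ℝ) = ⋃ n : ℕ, Set.Iic (-(1:ℝ)/(n+1)) := by
    ext u
    simp only [Set.mem_Iio, Set.mem_iUnion, Set.mem_Iic]
    constructor
    · intro hu
      obtain ⟨n, hn⟩ := exists_nat_one_div_lt (show (0:ℝ) < -u by linarith)
      exact ⟨n, by rw [neg_div]; linarith⟩
    · rintro ⟨n, hn⟩
      have : -(1:ℝ)/(n+1) < 0 :=
        div_neg_of_neg_of_pos (by norm_num) (by positivity)
      linarith
  rw [hunion]
  apply le_antisymm _ (zero_le)
  calc (hellySt G).measure (⋃ n : ℕ, Set.Iic (-(1:ℝ)/(n+1)))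
      ≤ ∑' n : ℕ, (hellySt G).measure (Set.Iic (-(1:ℝ)/(n+1))) := measure_iUnion_le _
    _ = 0 := by
        have hz : ∀ n : ℕ, (hellySt G).measure (Set.Iic (-(1:ℝ)/(n+1))) = 0 := by
          intro n
          apply this
          exact div_neg_of_neg_of_pos (by norm_num) (by positivity)
        simp [hz]
end Limit2

instance bwMeas_sfinite (f : ℝ → ℝ) (n : ℕ) : SFinite (bwMeas f n) := by
  unfold bwMeas; infer_instance

theorem bwMeas_singleton_zero (f : ℝ → ℝ) (n : ℕ) {s : ℝ}
    (hs : s ∉ Set.range (fun k : ℕ => (k:ℝ)/(n:ℝ))) : bwMeas f n {s} = 0 := by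
  rw [bwMeas, Measure.sum_apply _ (measurableSet_singleton s)]
  apply ENNReal.tsum_eq_zero.mpr
  intro k
  rw [Measure.smul_apply, Measure.dirac_apply' _ (measurableSet_singleton s)]
  have : ((k : ℝ) / n) ∉ ({s} : Set ℝ) := by
    simp only [Set.mem_singleton_iff]
    intro h
    exact hs ⟨k, h⟩
  simp [Set.indicator_of_notMem this]

theorem meas_Iic_eq_Iio (ν : Measure ℝ) {s : ℝ} (hs : ν {s} = 0) :
    ν (Set.Iic s) = ν (Set.Iio s) := by
  rw [← Set.Iio_insert, Set.insert_eq, measure_union (by simp) measurableSet_Iio, hs, zero_add]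

theorem bernstein_forward {f : ℝ → ℝ} (hf : ContDiffOn ℝ (⊤ : ℕ∞) f (Set.Ioi 0))
    (hcm : ∀ j : ℕ, ∀ x > (0 : ℝ), 0 ≤ (-1 : ℝ) ^ j * iteratedDeriv j f x) :
    ∃ μ : Measure ℝ, μ (Set.Iio 0) = 0 ∧
      ∀ x > (0 : ℝ), Integrable (fun t => Real.exp (-x * t)) μ ∧
        f x = ∫ t, Real.exp (-x * t) ∂μ := by
  set ν : ℕ → Measure ℝ := fun n => bwMeas f (n + 1) with hν
  obtain ⟨φ, G, hφ, hconv⟩ := helly_subseq ν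
  have hfc : ContinuousOn f (Set.Ioi 0) := hf.continuousOn
  have hfy : ∀ x > (0:ℝ), Tendsto (fun n : ℕ => f (yseq x (n + 1))) atTop (𝓝 (f x)) := by
    intro x hx
    have h1 : Tendsto (fun n : ℕ => yseq x (n + 1)) atTop (𝓝 x) :=
      (yseq_tendsto hx).comp (tendsto_add_atTop_nat 1)
    have h2 : ContinuousAt f x := hfc.continuousAt (isOpen_Ioi.mem_nhds hx)
    exact h2.tendsto.comp h1
  have hfynn : ∀ x > (0:ℝ), ∀ n : ℕ, 0 ≤ f (yseq x (n + 1)) := by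
    intro x hx n
    have := hcm 0 (yseq x (n+1)) (yseq_pos hx (Nat.le_add_left 1 n))
    simpa using this
  have hlap : ∀ x > (0:ℝ), ∀ n : ℕ, lapT (ν n) x = ENNReal.ofReal (f (yseq x (n+1))) :=
    fun x hx n => lapT_bwMeas hf hcm hx (Nat.le_add_left 1 n)
  have h0 : ∀ n, ν n (Set.Iio 0) = 0 := fun n => bwMeas_Iio f (n+1)
  have hbound : ∀ x', 0 < x' → ∀ n s, ν n (Set.Iic s)
      ≤ ENNReal.ofReal (Real.exp (x' * s)) * ENNReal.ofReal (f (yseq x' (n+1))) := by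
    intro x' hx' n s
    have := meas_Iic_le_lapT (ν n) (h0 n) hx'.le s
    rwa [hlap x' hx' n] at this
  have hCex : ∀ x', 0 < x' → ∃ C : ℝ, (0 ≤ C) ∧ (∀ n : ℕ, f (yseq x' (n+1)) ≤ C) := by
    intro x' hx'
    obtain ⟨C, hC⟩ := (hfy x' hx').isBoundedUnder_le.bddAbove_range
    refine ⟨C, le_trans (hfynn x' hx' 0) (hC ⟨0, rfl⟩), fun n => hC ⟨n, rfl⟩⟩
  have hGfin : ∀ q : ℚ, G q ≠ ∞ := by
    intro q
    obtain ⟨C, hC0, hC⟩ := hCex 1 one_pos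
    have hle : G q ≤ ENNReal.ofReal (Real.exp (1 * q)) * ENNReal.ofReal C := by
      apply le_of_tendsto (hconv q)
      filter_upwards with j
      exact (hbound 1 one_pos (φ j) q).trans
        (mul_le_mul_right (ENNReal.ofReal_le_ofReal (hC _)) _)
    exact ne_top_of_le_ne_top (ENNReal.mul_ne_top ENNReal.ofReal_ne_top ENNReal.ofReal_ne_top) hle
  have hG0 : ∀ q : ℚ, q < 0 → G q = 0 := by
    intro q hq
    have hz : ∀ j, ν (φ j) (Set.Iic (q:ℝ)) = 0 := by
      intro j
      apply measure_mono_null _ (h0 (φ j))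
      intro t ht
      exact Set.mem_Iio.mpr (lt_of_le_of_lt (Set.mem_Iic.mp ht)
        (show (q:ℝ) < 0 by exact_mod_cast hq))
    have h1 : Tendsto (fun j => ν (φ j) (Set.Iic (q:ℝ))) atTop (𝓝 0) := by
      simp only [hz]
      exact tendsto_const_nhds
    exact tendsto_nhds_unique (hconv q) h1
  set μ := (hellySt G).measure with hμ
  refine ⟨μ, hellySt_Iio_zero hG0, ?_⟩
  -- the bad (countable) set
  set Bad : Set ℝ := {s | ¬ContinuousAt (hellyF G) s}
    ∪ ⋃ j : ℕ, Set.range (fun k : ℕ => (k:ℝ)/((φ j + 1 : ℕ):ℝ)) with hBad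
  have hBadCount : Bad.Countable := by
    apply Set.Countable.union
    · exact (hellyF_mono (G := G)).countable_not_continuousAt
    · exact Set.countable_iUnion (fun j => Set.countable_range _)
  have hae : ∀ᵐ s : ℝ, s ∉ Bad :=
    measure_eq_zero_iff_ae_notMem.mp (hBadCount.measure_zero _)
  intro x hx
  have hx2 : 0 < x / 2 := half_pos hx
  obtain ⟨C, hC0, hC⟩ := hCex (x/2) hx2
  have hptw : ∀ s : ℝ, s ∉ Bad →
      Tendsto (fun j => ν (φ j) (Set.Iio s)) atTop (𝓝 (μ (Set.Iio s))) := by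
    intro s hs
    have hcont : ContinuousAt (hellyF G) s := by
      by_contra h
      exact hs (Or.inl h)
    have hatom : ∀ j, ν (φ j) {s} = 0 := by
      intro j
      apply bwMeas_singleton_zero
      intro hmem
      exact hs (Or.inr (Set.mem_iUnion.mpr ⟨j, hmem⟩))
    have h1 : ∀ j, ν (φ j) (Set.Iio s) = ν (φ j) (Set.Iic s) :=
      fun j => (meas_Iic_eq_Iio _ (hatom j)).symm
    have h2 := helly_tendsto ν φ hconv hGfin hcont
    rw [hμ, hellySt_measure_Iio hG0 hcont]
    simpa only [h1] using h2
  set K : ℝ → ℝ≥0∞ := fun s => ENNReal.ofReal (x * Real.exp (-x * s)) with hKdef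
  have hKmeas : Measurable K := by
    apply ENNReal.measurable_ofReal.comp
    exact ((Real.continuous_exp.comp (continuous_const.mul continuous_id)).measurable).const_mul x
  have hmeasj : ∀ j, Measurable (fun s => ν (φ j) (Set.Iio s)) := by
    intro j
    apply Monotone.measurable
    intro a b hab
    exact measure_mono (Set.Iio_subset_Iio hab)
  set D : ℝ → ℝ≥0∞ := fun s => (Set.Ioi (0:ℝ)).indicator
    (fun s => ENNReal.ofReal (2*C) * ENNReal.ofReal ((x/2) * Real.exp (-(x/2) * s))) s with hDdef
  have hDbound : ∀ j, ∀ s, K s * ν (φ j) (Set.Iio s) ≤ D s := by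
    intro j s
    by_cases hs : 0 < s
    · rw [hDdef]
      simp only [Set.indicator_of_mem (Set.mem_Ioi.mpr hs)]
      have hb1 : ν (φ j) (Set.Iio s)
          ≤ ENNReal.ofReal (Real.exp ((x/2) * s)) * ENNReal.ofReal C := by
        calc ν (φ j) (Set.Iio s) ≤ ν (φ j) (Set.Iic s) := measure_mono Set.Iio_subset_Iic_self
          _ ≤ _ := (hbound (x/2) hx2 (φ j) s).trans
              (mul_le_mul_right (ENNReal.ofReal_le_ofReal (hC _)) _)
      calc K s * ν (φ j) (Set.Iio s)
          ≤ K s * (ENNReal.ofReal (Real.exp ((x/2)*s)) * ENNReal.ofReal C) :=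
            mul_le_mul_right hb1 _
        _ = ENNReal.ofReal (2*C) * ENNReal.ofReal ((x/2) * Real.exp (-(x/2)*s)) := by
            rw [hKdef]
            rw [← ENNReal.ofReal_mul (Real.exp_nonneg _),
              ← ENNReal.ofReal_mul (by positivity),
              ← ENNReal.ofReal_mul (by linarith)]
            congr 1
            have hexp : Real.exp (-x*s) * Real.exp ((x/2) * s) = Real.exp (-(x/2)*s) := by
              rw [← Real.exp_add]
              congr 1
              ring
            rw [← hexp]
            ring
    · have hz : ν (φ j) (Set.Iio s) = 0 :=
        measure_mono_null (fun t ht => lt_of_lt_of_le ht (not_lt.mp hs)) (h0 (φ j))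
      rw [hz, mul_zero]
      exact zero_le
  have hDfin : (∫⁻ s, D s) ≠ ∞ := by
    rw [hDdef]
    rw [lintegral_indicator measurableSet_Ioi]
    rw [lintegral_const_mul _ (by
      apply ENNReal.measurable_ofReal.comp
      exact ((Real.continuous_exp.comp (continuous_const.mul continuous_id)).measurable).const_mul _)]
    rw [lintegral_exp_tail hx2 0]
    exact ENNReal.mul_ne_top ENNReal.ofReal_ne_top ENNReal.ofReal_ne_top
  have hlim : ∀ᵐ s : ℝ, Tendsto (fun j => K s * ν (φ j) (Set.Iio s)) atTop
      (𝓝 (K s * μ (Set.Iio s))) := by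
    filter_upwards [hae] with s hs
    exact ENNReal.Tendsto.const_mul (hptw s hs) (Or.inr ENNReal.ofReal_ne_top)
  have hDCT := tendsto_lintegral_of_dominated_convergence (F := fun j s => K s * ν (φ j) (Set.Iio s))
    (f := fun s => K s * μ (Set.Iio s)) (μ := volume) D
    (fun j => hKmeas.mul (hmeasj j))
    (fun j => Filter.Eventually.of_forall (hDbound j)) hDfin hlim
  have hL1 : ∀ j, (∫⁻ s, K s * ν (φ j) (Set.Iio s)) = ENNReal.ofReal (f (yseq x (φ j + 1))) := by
    intro j
    rw [← lapT_eq_lintegral_Iio (ν (φ j)) hx, hlap x hx (φ j)]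
  have hL2 : Tendsto (fun j => ENNReal.ofReal (f (yseq x (φ j + 1)))) atTop
      (𝓝 (ENNReal.ofReal (f x))) := by
    apply (ENNReal.continuous_ofReal.continuousAt.tendsto).comp
    exact (hfy x hx).comp hφ.tendsto_atTop
  have hlapμ : lapT μ x = ENNReal.ofReal (f x) := by
    rw [lapT_eq_lintegral_Iio μ hx]
    apply tendsto_nhds_unique _ hL2
    simpa only [hL1] using hDCT
  have hmeas_exp : AEStronglyMeasurable (fun t : ℝ => Real.exp (-x * t)) μ :=
    (Real.continuous_exp.comp (continuous_const.mul continuous_id)).aestronglyMeasurable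
  constructor
  · refine ⟨hmeas_exp, ?_⟩
    rw [hasFiniteIntegral_iff_ofReal (Filter.Eventually.of_forall fun t => Real.exp_nonneg _)]
    rw [show (∫⁻ t, ENNReal.ofReal (Real.exp (-x*t)) ∂μ) = lapT μ x from rfl, hlapμ]
    exact ENNReal.ofReal_lt_top
  · rw [integral_eq_lintegral_of_nonneg_ae
      (Filter.Eventually.of_forall fun t => Real.exp_nonneg _) hmeas_exp]
    rw [show (∫⁻ t, ENNReal.ofReal (Real.exp (-x*t)) ∂μ) = lapT μ x from rfl, hlapμ]
    rw [ENNReal.toReal_ofReal (by have := hcm 0 x hx; simpa using this)]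


theorem poly_exp_bound (m : ℕ) {c : ℝ} (hc : 0 < c) {t : ℝ} (ht : 0 ≤ t) :
    t ^ m * Real.exp (-c * t) ≤ m.factorial / c ^ m := by
  have h1 : (c * t) ^ m / m.factorial ≤ Real.exp (c * t) :=
    Real.pow_div_factorial_le_exp (x := c*t) (by positivity) m
  have h2 : (0:ℝ) < Real.exp (c * t) := Real.exp_pos _
  have h3 : Real.exp (-c * t) = (Real.exp (c * t))⁻¹ := by
    rw [← Real.exp_neg]; congr 1; ring
  rw [h3]
  rw [mul_pow] at h1
  have hfac : (0:ℝ) < (m.factorial : ℝ) := by positivity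
  have hcm : (0:ℝ) < c ^ m := by positivity
  rw [div_le_iff₀ hfac] at h1
  rw [mul_inv_le_iff₀ h2, div_mul_eq_mul_div, le_div_iff₀ hcm]
  nlinarith [pow_nonneg ht m]

theorem bernstein_backward {f : ℝ → ℝ} (μ : Measure ℝ) (h0 : μ (Set.Iio 0) = 0)
    (h : ∀ x > (0:ℝ), Integrable (fun t => Real.exp (-x*t)) μ ∧
      f x = ∫ t, Real.exp (-x*t) ∂μ) :
    ∀ j : ℕ, ∀ x > (0:ℝ), 0 ≤ (-1:ℝ)^j * iteratedDeriv j f x := by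
  have hae : ∀ᵐ t ∂μ, 0 ≤ t := by
    rw [ae_iff]
    have : {t : ℝ | ¬ 0 ≤ t} = Set.Iio 0 := by ext t; simp
    rw [this]; exact h0
  -- main induction
  have main : ∀ j : ℕ, ∀ x > (0:ℝ),
      Integrable (fun t => (-t)^j * Real.exp (-x*t)) μ ∧
      iteratedDeriv j f x = ∫ t, (-t)^j * Real.exp (-x*t) ∂μ := by
    intro j
    induction j with
    | zero =>
        intro x hx
        refine ⟨by simpa using (h x hx).1, ?_⟩
        simpa using (h x hx).2
    | succ j ih =>
        intro x hx
        -- the parametric integral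
        set F : ℝ → ℝ → ℝ := fun y t => (-t)^j * Real.exp (-y*t) with hF
        set F' : ℝ → ℝ → ℝ := fun y t => (-t)^(j+1) * Real.exp (-y*t) with hF'
        have hmeasF : ∀ y : ℝ, AEStronglyMeasurable (F y) μ := by
          intro y
          apply Continuous.aestronglyMeasurable
          exact ((continuous_neg.pow j).mul
            (Real.continuous_exp.comp (continuous_const.mul continuous_id)))
        have hmeasF' : AEStronglyMeasurable (F' x) μ := by
          apply Continuous.aestronglyMeasurable
          exact ((continuous_neg.pow (j+1)).mul
            (Real.continuous_exp.comp (continuous_const.mul continuous_id)))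
        set M : ℝ := (j+1).factorial / (x/4) ^ (j+1) with hM
        set bnd : ℝ → ℝ := fun t => M * Real.exp (-(x/2) * t) with hbnd
        have hbnd_int : Integrable bnd μ := ((h (x/2) (half_pos hx)).1.const_mul M)
        have hball : ∀ y ∈ Metric.ball x (x/4), 3*x/4 ≤ y ∧ 0 < y := by
          intro y hy
          rw [Metric.mem_ball, Real.dist_eq, abs_lt] at hy
          constructor <;> [linarith [hy.1]; linarith [hy.1]]
        have h_bound : ∀ᵐ t ∂μ, ∀ y ∈ Metric.ball x (x/4), ‖F' y t‖ ≤ bnd t := by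
          filter_upwards [hae] with t ht
          intro y hy
          obtain ⟨hy1, hy2⟩ := hball y hy
          rw [hF', hbnd]
          have habs : ‖(-t)^(j+1) * Real.exp (-y*t)‖ = t^(j+1) * Real.exp (-y*t) := by
            rw [norm_mul, norm_pow, norm_neg, Real.norm_eq_abs, Real.norm_eq_abs,
              abs_of_nonneg ht, abs_of_nonneg (Real.exp_nonneg _)]
          rw [habs]
          have hsplit : Real.exp (-y*t) ≤ Real.exp (-(x/4)*t) * Real.exp (-(x/2)*t) := by
            rw [← Real.exp_add]
            apply Real.exp_le_exp.mpr
            nlinarith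
          calc t^(j+1) * Real.exp (-y*t)
              ≤ t^(j+1) * (Real.exp (-(x/4)*t) * Real.exp (-(x/2)*t)) := by
                apply mul_le_mul_of_nonneg_left hsplit (pow_nonneg ht _)
            _ = (t^(j+1) * Real.exp (-(x/4)*t)) * Real.exp (-(x/2)*t) := by ring
            _ ≤ M * Real.exp (-(x/2)*t) := by
                apply mul_le_mul_of_nonneg_right _ (Real.exp_nonneg _)
                exact poly_exp_bound (j+1) (by positivity) ht
        have h_diff : ∀ᵐ t ∂μ, ∀ y ∈ Metric.ball x (x/4), HasDerivAt (fun y => F y t) (F' y t) y := by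
          filter_upwards with t
          intro y _
          rw [hF, hF']
          have h1 : HasDerivAt (fun y : ℝ => -y*t) (-t) y := by
            simpa using ((hasDerivAt_id y).neg).mul_const t
          have h2 := h1.exp.const_mul ((-t)^j)
          show HasDerivAt (fun y => (-t)^j * Real.exp (-y*t)) ((-t)^(j+1) * Real.exp (-y*t)) y
          refine h2.congr_deriv ?_
          rw [pow_succ]
          ring
        have hkey := hasDerivAt_integral_of_dominated_loc_of_deriv_le
          (F := F) (F' := F') (x₀ := x) (bound := bnd) (s := Metric.ball x (x/4)) (Metric.ball_mem_nhds x (by positivity))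
          (Filter.Eventually.of_forall hmeasF) (ih x hx).1 hmeasF' h_bound hbnd_int h_diff
        constructor
        · exact hkey.1
        · have hEq : iteratedDeriv j f =ᶠ[𝓝 x] (fun y => ∫ t, F y t ∂μ) := by
            filter_upwards [isOpen_Ioi.mem_nhds hx] with y hy
            exact (ih y hy).2
          rw [iteratedDeriv_succ]
          rw [hEq.deriv_eq, hkey.2.deriv]
  intro j x hx
  obtain ⟨hint, heq⟩ := main j x hx
  have hsmul : (-1:ℝ)^j * ∫ t, (-t)^j * Real.exp (-x*t) ∂μ
      = ∫ t, (-1:ℝ)^j * ((-t)^j * Real.exp (-x*t)) ∂μ := by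
    rw [← smul_eq_mul, ← integral_smul]
    simp [smul_eq_mul]
  rw [heq, hsmul]
  have : ∀ᵐ t ∂μ, 0 ≤ (-1:ℝ)^j * ((-t)^j * Real.exp (-x*t)) := by
    filter_upwards [hae] with t ht
    have : (-1:ℝ)^j * (-t)^j = t^j := by
      rw [← mul_pow]
      norm_num
    rw [← mul_assoc, this]
    positivity
  exact integral_nonneg_of_ae this

/-- Bernstein–Widder theorem: a smooth function on (0,∞) is completely monotone if and
only if it is the Laplace transform of a nonnegative Borel measure on [0,∞). -/
theorem bernstein_widder (f : ℝ → ℝ) (hf : ContDiffOn ℝ (⊤ : ℕ∞) f (Set.Ioi 0)) :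
    (∀ j : ℕ, ∀ x > (0 : ℝ), 0 ≤ (-1 : ℝ) ^ j * iteratedDeriv j f x) ↔
      ∃ μ : Measure ℝ, μ (Set.Iio 0) = 0 ∧
        ∀ x > (0 : ℝ), Integrable (fun t => Real.exp (-x * t)) μ ∧
          f x = ∫ t, Real.exp (-x * t) ∂μ := by
  constructor
  · intro hcm
    exact bernstein_forward hf hcm
  · rintro ⟨μ, h0, h⟩
    exact bernstein_backward μ h0 h
end

section
/- If k ≥ 1 is an integer and f(x) = ∫₀^{1/x} (1 − tx)^{k−1} dα(t) for some nonnegative Borel measure α, then f is k-times monotone on (0,∞), i.e., (−1)^j f^{(j)}(x) ≥ 0 for all 0 ≤ j ≤ k and x > 0. -/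
/-!
Differentiating under the integral sign gives, for `i < k`,
`(-1)^i f⁽ⁱ⁾(x) = (k-1)!/(k-1-i)! · ∫_{[0,1/x]} t^i (1 - t x)^(k-1-i) dα(t)`,
which is nonnegative and antitone in `x`; for `i = k - 1` the kernel `(1 - t x)₊⁰` jumps at
`t = 1/x`, so the formula only holds when `α` has no atom at `1/x`, i.e. off a countable set.
Then `(-1)^j f⁽ʲ⁾ = -((-1)^(j-1) f⁽ʲ⁻¹⁾)'` is nonnegative, because a function that agrees with an
antitone function off a countable set has a nonpositive derivative wherever it is
differentiable (and `deriv` is `0` elsewhere).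
-/

open MeasureTheory Filter Set Topology

/-- Unlike `max u 0 ^ 0 = 1`, `truncPow 0` is the indicator of `[0, ∞)`, so that
`truncPow.hasDerivAt` also holds for `n = 0` away from `u = 0`. -/
noncomputable def truncPow (n : ℕ) (u : ℝ) : ℝ := if 0 ≤ u then u ^ n else 0

namespace truncPow

lemma of_nonneg {n : ℕ} {u : ℝ} (hu : 0 ≤ u) : truncPow n u = u ^ n := if_pos hu

lemma of_neg {n : ℕ} {u : ℝ} (hu : u < 0) : truncPow n u = 0 := if_neg hu.not_ge

lemma nonneg (n : ℕ) (u : ℝ) : 0 ≤ truncPow n u := by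
  unfold truncPow; split_ifs with hu
  · positivity
  · rfl

lemma le_one (n : ℕ) {u : ℝ} (hu : u ≤ 1) : truncPow n u ≤ 1 := by
  unfold truncPow; split_ifs with h0
  · exact pow_le_one₀ h0 hu
  · exact zero_le_one

lemma monotone (n : ℕ) : Monotone (truncPow n) := by
  intro u v huv
  rcases lt_or_ge u 0 with hu | hu
  · rw [of_neg hu]; exact nonneg n v
  · rw [of_nonneg hu, of_nonneg (hu.trans huv)]
    exact pow_le_pow_left₀ hu huv n

@[fun_prop]
lemma measurable (n : ℕ) : Measurable (truncPow n) :=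
  Measurable.ite measurableSet_Ici (measurable_id.pow_const n) measurable_const

lemma succ_eq (n : ℕ) (u : ℝ) : truncPow (n + 1) u = max u 0 ^ (n + 1) := by
  rcases lt_or_ge u 0 with hu | hu
  · simp [of_neg hu, max_eq_right hu.le]
  · simp [of_nonneg hu, max_eq_left hu]

lemma abs_succ_sub_le (n : ℕ) {u v : ℝ} (hu : u ≤ 1) (hv : v ≤ 1) :
    |truncPow (n + 1) u - truncPow (n + 1) v| ≤ (n + 1) * |u - v| := by
  have hmax : max |max u 0| |max v 0| ^ n ≤ 1 := by
    refine pow_le_one₀ (le_max_of_le_left (abs_nonneg _)) (max_le ?_ ?_) <;>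
      rw [abs_of_nonneg (le_max_right _ _)] <;> exact max_le (by assumption) zero_le_one
  rw [succ_eq, succ_eq]
  calc _ ≤ |max u 0 - max v 0| * (n + 1 : ℕ) * max |max u 0| |max v 0| ^ n :=
        abs_pow_sub_pow_le _ _ _
    _ ≤ |u - v| * (n + 1) * 1 := by
        push_cast
        exact mul_le_mul (mul_le_mul_of_nonneg_right (abs_max_sub_max_le_abs u v 0)
          (by positivity)) hmax (by positivity) (by positivity)
    _ = (n + 1) * |u - v| := by ring

lemma hasDerivAt {n : ℕ} {u : ℝ} (h : u ≠ 0 ∨ n ≠ 0) :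
    HasDerivAt (truncPow (n + 1)) ((n + 1) * truncPow n u) u := by
  rcases lt_trichotomy u 0 with hu | rfl | hu
  · have hzero : truncPow (n + 1) =ᶠ[𝓝 u] fun _ => 0 :=
      (eventually_lt_nhds hu).mono fun v hv => of_neg hv
    simpa [of_neg hu] using (hasDerivAt_const u (0 : ℝ)).congr_of_eventuallyEq hzero
  · have hn : n ≠ 0 := h.resolve_left (not_not.mpr rfl)
    rw [of_nonneg le_rfl, zero_pow hn, mul_zero, hasDerivAt_iff_isLittleO_nhds_zero]
    have hbig : (fun h => truncPow (n + 1) h) =O[𝓝 0] fun h : ℝ => h ^ (n + 1) :=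
      Asymptotics.IsBigO.of_bound 1 (Eventually.of_forall fun v => by
        rw [one_mul, succ_eq, Real.norm_eq_abs, Real.norm_eq_abs, abs_pow, abs_pow]
        refine pow_le_pow_left₀ (abs_nonneg _) ?_ _
        rw [abs_of_nonneg (le_max_right _ _)]
        exact max_le (le_abs_self v) (abs_nonneg v))
    simpa [of_nonneg le_rfl] using
      hbig.trans_isLittleO (Asymptotics.isLittleO_pow_id (by omega))
  · have hpow : truncPow (n + 1) =ᶠ[𝓝 u] fun v => v ^ (n + 1) :=
      (eventually_gt_nhds hu).mono fun v hv => of_nonneg hv.le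
    simpa [of_nonneg hu.le] using (hasDerivAt_pow (n + 1) u).congr_of_eventuallyEq hpow

end truncPow

lemma deriv_nonpos_of_eqOn_compl_countable {φ ψ : ℝ → ℝ} {U C : Set ℝ} {x : ℝ} (hU : IsOpen U)
    (hC : C.Countable) (hψ : AntitoneOn ψ U) (heq : EqOn φ ψ (U \ C)) (hx : x ∈ U) :
    deriv φ x ≤ 0 := by
  by_cases hd : DifferentiableAt ℝ φ x
  swap
  · rw [deriv_zero_of_not_differentiableAt hd]
  set R := 𝓝[Ioi x \ C] x
  have hR : R.NeBot := by
    have hsub := closure_mono ((hC.dense_compl ℝ).open_subset_closure_inter (isOpen_Ioi (a := x)))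
    rw [closure_closure, closure_Ioi] at hsub
    rw [← mem_closure_iff_nhdsWithin_neBot, sdiff_eq]
    exact hsub (mem_Ici.mpr le_rfl)
  have hgood : ∀ᶠ y in R, y ∈ U \ C ∧ x < y := by
    filter_upwards [nhdsWithin_le_nhds (hU.mem_nhds hx), self_mem_nhdsWithin] with y hyU hy
    exact ⟨⟨hyU, hy.2⟩, hy.1⟩
  have hφR : Tendsto φ R (𝓝 (φ x)) := hd.continuousAt.tendsto.mono_left nhdsWithin_le_nhds
  -- `φ x` is a limit of values `ψ z` with `x < z < y`, all of which dominate `ψ y`.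
  have hle : ∀ᶠ y in R, φ y ≤ φ x := by
    filter_upwards [hgood] with y ⟨hy, hxy⟩
    refine ge_of_tendsto hφR ?_
    filter_upwards [hgood, nhdsWithin_le_nhds (eventually_lt_nhds hxy)] with z ⟨hz, _⟩ hzy
    rw [heq hy, heq hz]
    exact hψ hz.1 hy.1 hzy.le
  refine le_of_tendsto ((hasDerivAt_iff_tendsto_slope.mp hd.hasDerivAt).mono_left
    (nhdsWithin_mono x fun y (hy : y ∈ Ioi x \ C) => hy.1.ne')) ?_
  filter_upwards [hle, hgood] with y hφy ⟨_, hxy⟩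
  rw [slope_def_field]
  exact div_nonpos_of_nonpos_of_nonneg (by linarith) (by linarith)

noncomputable def williamsonIntegral (α : Measure ℝ) (m n : ℕ) (x : ℝ) : ℝ :=
  ∫ t in Icc 0 (1 / x), t ^ m * (1 - t * x) ^ n ∂α

section Williamson

variable {α : Measure ℝ}

lemma integrableOn_Icc_mul_truncPow {b : ℝ} (hb : α (Icc 0 b) ≠ ⊤) (m n : ℕ) {x : ℝ}
    (hx : 0 ≤ x) : IntegrableOn (fun t => t ^ m * truncPow n (1 - t * x)) (Icc 0 b) α := by
  refine Measure.integrableOn_of_bounded (M := b ^ m) hb (by fun_prop) ?_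
  filter_upwards [ae_restrict_mem measurableSet_Icc] with t ⟨ht0, htb⟩
  rw [Real.norm_eq_abs, abs_of_nonneg (mul_nonneg (pow_nonneg ht0 m) (truncPow.nonneg _ _))]
  calc t ^ m * truncPow n (1 - t * x) ≤ b ^ m * 1 :=
        mul_le_mul (pow_le_pow_left₀ ht0 htb m) (truncPow.le_one n (by nlinarith))
          (truncPow.nonneg _ _) (pow_nonneg (ht0.trans htb) m)
    _ = b ^ m := mul_one _

lemma williamsonIntegral_eq_setIntegral_Icc {m n : ℕ} {x b : ℝ} (hx : 0 < x) (hb : 1 / x ≤ b) :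
    williamsonIntegral α m n x = ∫ t in Icc 0 b, t ^ m * truncPow n (1 - t * x) ∂α := by
  rw [setIntegral_eq_of_subset_of_forall_sdiff_eq_zero measurableSet_Icc
    (Icc_subset_Icc le_rfl hb) ?_]
  · refine setIntegral_congr_fun measurableSet_Icc fun t ht => ?_
    rw [truncPow.of_nonneg]
    linarith [(le_div_iff₀ hx).mp (one_div x ▸ ht.2 : t ≤ 1 / x)]
  · rintro t ⟨⟨ht0, -⟩, ht⟩
    have htx : 1 < t * x := (div_lt_iff₀ hx).mp (lt_of_not_ge fun h => ht ⟨ht0, h⟩)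
    rw [truncPow.of_neg (by linarith), mul_zero]

lemma williamsonIntegral_nonneg {m n : ℕ} {x : ℝ} (hx : 0 < x) :
    0 ≤ williamsonIntegral α m n x := by
  rw [williamsonIntegral_eq_setIntegral_Icc hx le_rfl]
  exact setIntegral_nonneg measurableSet_Icc fun t ht =>
    mul_nonneg (pow_nonneg ht.1 m) (truncPow.nonneg _ _)

lemma antitoneOn_williamsonIntegral (hfin : ∀ b, α (Icc 0 b) ≠ ⊤) (m n : ℕ) :
    AntitoneOn (williamsonIntegral α m n) (Ioi 0) := by
  intro x hx y hy hxy
  rw [williamsonIntegral_eq_setIntegral_Icc hx le_rfl,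
    williamsonIntegral_eq_setIntegral_Icc hy (one_div_le_one_div_of_le hx hxy)]
  refine setIntegral_mono_on (integrableOn_Icc_mul_truncPow (hfin _) m n (le_of_lt hy))
    (integrableOn_Icc_mul_truncPow (hfin _) m n (le_of_lt hx)) measurableSet_Icc fun t ht => ?_
  exact mul_le_mul_of_nonneg_left (truncPow.monotone n (by nlinarith [ht.1]))
    (pow_nonneg ht.1 m)

/-- For `n = 0` the kernel has a kink at `t = 1 / x`, which is harmless unless `α` has an atom
there. -/
lemma hasDerivAt_setIntegral_Icc_mul_truncPow {b : ℝ} (hb : α (Icc 0 b) ≠ ⊤) (m n : ℕ) {x : ℝ}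
    (hx : 0 < x) (hreg : n ≠ 0 ∨ α {1 / x} = 0) :
    HasDerivAt (fun y => ∫ t in Icc 0 b, t ^ m * truncPow (n + 1) (1 - t * y) ∂α)
      (-((n + 1) * ∫ t in Icc 0 b, t ^ (m + 1) * truncPow n (1 - t * x) ∂α)) x := by
  have : IsFiniteMeasure (α.restrict (Icc 0 b)) :=
    ⟨by rwa [Measure.restrict_apply_univ, lt_top_iff_ne_top]⟩
  have hlip : ∀ᵐ t ∂α.restrict (Icc 0 b), LipschitzOnWith (Real.nnabs ((n + 1) * b ^ (m + 1)))
      (fun y => t ^ m * truncPow (n + 1) (1 - t * y)) (Ioi 0) := by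
    filter_upwards [ae_restrict_mem measurableSet_Icc] with t ⟨ht0, htb⟩
    refine LipschitzOnWith.of_dist_le_mul fun y hy z hz => ?_
    have hb0 : 0 ≤ b := ht0.trans htb
    rw [Real.coe_nnabs, abs_of_nonneg (by positivity), Real.dist_eq, Real.dist_eq, ← mul_sub,
      abs_mul, abs_of_nonneg (pow_nonneg ht0 m)]
    calc t ^ m * |truncPow (n + 1) (1 - t * y) - truncPow (n + 1) (1 - t * z)|
        ≤ t ^ m * ((n + 1) * (t * |y - z|)) := by
          refine mul_le_mul_of_nonneg_left ?_ (pow_nonneg ht0 m)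
          have h := truncPow.abs_succ_sub_le n (u := 1 - t * y) (v := 1 - t * z)
            (by nlinarith [mem_Ioi.mp hy]) (by nlinarith [mem_Ioi.mp hz])
          rwa [show 1 - t * y - (1 - t * z) = t * (z - y) by ring, abs_mul, abs_of_nonneg ht0,
            abs_sub_comm z y] at h
      _ = (n + 1) * t ^ (m + 1) * |y - z| := by ring
      _ ≤ (n + 1) * b ^ (m + 1) * |y - z| := by gcongr
  have hdiff : ∀ᵐ t ∂α.restrict (Icc 0 b), HasDerivAt
      (fun y => t ^ m * truncPow (n + 1) (1 - t * y))
      (-((n + 1) * (t ^ (m + 1) * truncPow n (1 - t * x)))) x := by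
    have hkink : ∀ᵐ t ∂α.restrict (Icc 0 b), 1 - t * x ≠ 0 ∨ n ≠ 0 := by
      rcases hreg with hn | hatom
      · exact Eventually.of_forall fun _ => Or.inr hn
      · refine ae_restrict_of_ae ((measure_eq_zero_iff_ae_notMem.mp hatom).mono fun t ht => ?_)
        refine Or.inl fun h => ht ?_
        rw [mem_singleton_iff, eq_div_iff hx.ne']
        linarith
    filter_upwards [hkink] with t ht
    have hinner : HasDerivAt (fun y => 1 - t * y) (-t) x := by
      simpa using ((hasDerivAt_id x).const_mul t).const_sub 1
    exact (((truncPow.hasDerivAt ht).comp x hinner).const_mul (t ^ m)).congr_deriv (by ring)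
  have key := hasDerivAt_integral_of_dominated_loc_of_lip
    (F := fun y t => t ^ m * truncPow (n + 1) (1 - t * y)) (Ioi_mem_nhds hx)
    (Eventually.of_forall fun y => by fun_prop) (integrableOn_Icc_mul_truncPow hb m (n + 1) hx.le)
    (by fun_prop) hlip (integrable_const _) hdiff
  simpa only [integral_neg, integral_const_mul] using key.2

lemma hasDerivAt_williamsonIntegral (hfin : ∀ b, α (Icc 0 b) ≠ ⊤) (m n : ℕ) {x : ℝ}
    (hx : 0 < x) (hreg : n ≠ 0 ∨ α {1 / x} = 0) :
    HasDerivAt (williamsonIntegral α m (n + 1)) (-((n + 1) * williamsonIntegral α (m + 1) n x))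
      x := by
  have hloc : williamsonIntegral α m (n + 1) =ᶠ[𝓝 x]
      fun y => ∫ t in Icc 0 (2 / x), t ^ m * truncPow (n + 1) (1 - t * y) ∂α := by
    filter_upwards [eventually_gt_nhds (half_lt_self hx)] with y hy
    refine williamsonIntegral_eq_setIntegral_Icc (by linarith) ?_
    rw [div_le_div_iff₀ (by linarith) hx]
    linarith
  rw [williamsonIntegral_eq_setIntegral_Icc (b := 2 / x) hx (by gcongr; norm_num)]
  exact (hasDerivAt_setIntegral_Icc_mul_truncPow (hfin _) m n hx hreg).congr_of_eventuallyEq hloc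

lemma countable_setOf_measure_singleton_one_div_ne_zero (hfin : ∀ b, α (Icc 0 b) ≠ ⊤) :
    {x : ℝ | 0 < x ∧ α {1 / x} ≠ 0}.Countable := by
  have hatoms : ∀ N : ℕ, {t : ℝ | 0 < α.restrict (Icc 0 N) {t}}.Countable := fun N => by
    have : IsFiniteMeasure (α.restrict (Icc 0 N)) :=
      ⟨by rw [Measure.restrict_apply_univ, lt_top_iff_ne_top]; exact hfin N⟩
    exact Measure.countable_meas_pos_of_disjoint_iUnion (fun _ => measurableSet_singleton _)
      fun s t hst => disjoint_singleton.mpr hst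
  refine ((countable_iUnion hatoms).preimage inv_injective).mono fun x ⟨hx, hatom⟩ => ?_
  obtain ⟨N, hN⟩ := exists_nat_ge x⁻¹
  refine mem_iUnion.mpr ⟨N, ?_⟩
  rw [mem_ofPred_eq, Measure.restrict_apply (measurableSet_singleton _),
    singleton_inter_of_mem (show x⁻¹ ∈ Icc 0 (N : ℝ) from ⟨inv_nonneg.mpr hx.le, hN⟩), ← one_div]
  exact pos_iff_ne_zero.mpr hatom

lemma measure_Icc_ne_top_of_integrableOn {p : ℕ}
    (hint : ∀ x > (0 : ℝ), IntegrableOn (fun t => (1 - t * x) ^ p) (Icc 0 (1 / x)) α) (b : ℝ) :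
    α (Icc 0 b) ≠ ⊤ := by
  wlog hb : 0 < b generalizing b
  · exact ne_top_of_le_ne_top (this 1 one_pos) (measure_mono (Icc_subset_Icc le_rfl (by linarith)))
  -- On `[0, b]` the kernel at `x = 1 / (2 b)` is at least `(1 / 2) ^ p`.
  have hconst : IntegrableOn (fun _ => (1 / 2 : ℝ) ^ p) (Icc 0 b) α := by
    refine ((hint (1 / (2 * b)) (by positivity)).mono_set (Icc_subset_Icc le_rfl ?_)).mono'
      aestronglyMeasurable_const ?_
    · rw [one_div_one_div]; linarith
    · filter_upwards [ae_restrict_mem measurableSet_Icc] with t ⟨ht0, htb⟩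
      rw [Real.norm_eq_abs, abs_of_nonneg (by positivity)]
      refine pow_le_pow_left₀ (by norm_num) ?_ p
      rw [mul_one_div, le_sub_comm, div_le_iff₀ (by positivity)]
      linarith
  exact (((integrableOn_const_iff (by simp)).mp hconst).resolve_left (by simp)).ne

end Williamson

lemma iteratedDeriv_eq_williamsonIntegral {α : Measure ℝ} (hfin : ∀ b, α (Icc 0 b) ≠ ⊤)
    {p : ℕ} {f : ℝ → ℝ} (hf : EqOn f (williamsonIntegral α 0 p) (Ioi 0)) {i : ℕ} (hi : i ≤ p)
    {x : ℝ} (hx : 0 < x) (hreg : i < p ∨ α {1 / x} = 0) :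
    iteratedDeriv i f x = (-1) ^ i * p.descFactorial i * williamsonIntegral α i (p - i) x := by
  induction i generalizing x with
  | zero => simp [hf hx]
  | succ i ih =>
    obtain ⟨n, hn⟩ : ∃ n, p - i = n + 1 := ⟨p - i - 1, by omega⟩
    have hloc : iteratedDeriv i f =ᶠ[𝓝 x]
        fun y => (-1) ^ i * p.descFactorial i * williamsonIntegral α i (n + 1) y :=
      (eventually_gt_nhds hx).mono fun y hy => by rw [ih (by omega) hy (Or.inl (by omega)), hn]
    have hreg' : n ≠ 0 ∨ α {1 / x} = 0 := hreg.imp_left fun _ => by omega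
    rw [iteratedDeriv_succ, hloc.deriv_eq, deriv_const_mul_field,
      (hasDerivAt_williamsonIntegral hfin i n hx hreg').deriv, Nat.descFactorial_succ, hn,
      show p - (i + 1) = n by omega]
    push_cast
    ring

/-- If f(x) = ∫₀^{1/x} (1−tx)^{k−1} dα(t) for a nonnegative Borel measure α,
then f is k-times monotone on (0,∞). -/
theorem k_times_monotone (k : ℕ) (hk : 1 ≤ k) (f : ℝ → ℝ) (α : Measure ℝ)
    (hint : ∀ x > (0 : ℝ),
      IntegrableOn (fun t => (1 - t * x) ^ (k - 1)) (Set.Icc 0 (1 / x)) α)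
    (hf : ∀ x > (0 : ℝ),
      f x = ∫ t in Set.Icc 0 (1 / x), (1 - t * x) ^ (k - 1) ∂α) :
    ∀ j : ℕ, j ≤ k → ∀ x > (0 : ℝ), 0 ≤ (-1 : ℝ) ^ j * iteratedDeriv j f x := by
  obtain ⟨p, rfl⟩ : ∃ p, k = p + 1 := ⟨k - 1, by omega⟩
  have hfin := measure_Icc_ne_top_of_integrableOn hint
  have hfW : EqOn f (williamsonIntegral α 0 p) (Ioi 0) := fun x hx => by
    simp [hf x hx, williamsonIntegral]
  intro j hj x hx
  rcases j with _ | i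
  · simpa [hfW hx] using williamsonIntegral_nonneg hx
  have hφ : (-1) ^ (i + 1) * iteratedDeriv (i + 1) f x =
      -deriv (fun y => (-1) ^ i * iteratedDeriv i f y) x := by
    rw [iteratedDeriv_succ, deriv_const_mul_field]
    ring
  rw [hφ, neg_nonneg]
  refine deriv_nonpos_of_eqOn_compl_countable isOpen_Ioi
    (countable_setOf_measure_singleton_one_div_ne_zero hfin)
    (ψ := fun y => p.descFactorial i * williamsonIntegral α i (p - i) y)
    (fun a ha b hb hab => mul_le_mul_of_nonneg_left
      (antitoneOn_williamsonIntegral hfin i (p - i) ha hb hab) (Nat.cast_nonneg _))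
    (fun y ⟨hy, hyC⟩ => ?_) hx
  have hatom : α {1 / y} = 0 := by_contra fun h => hyC ⟨hy, h⟩
  rw [iteratedDeriv_eq_williamsonIntegral hfin hfW (by omega) hy (Or.inr hatom), ← mul_assoc,
    ← mul_assoc, ← pow_add, Even.neg_one_pow ⟨i, rfl⟩, one_mul]
end
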